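/- Let σ ∈ S_{nd} (n ≥ 3) be a permutation supported on {0,...,2d-1} such that σ, ω^d(σ) satisfy the braid relation and σ·ω^d(σ) ≠ ω^d(σ)·σ, and set σ_s = ω^{(s-1)d}(σ) for s = 1,...,n-1. Then the σ_s satisfy the braid relations: σ_r σ_s = σ_s σ_r when |r-s| ≥ 2, and σ_r σ_s σ_r = σ_s σ_r σ_s when |r-s| = 1. Consequently there is a surjective group homomorphism from the Artin braid group B_n onto the subgroup B_n(σ) = ⟨σ₁,...,σ_{n-1}⟩ of S_{nd}, sending the standard generator β_s to σ_s. -/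

import Mathlib

/-- The shift of a permutation of `ℕ` up by `d`: fixes `{0,…,d-1}` and acts as `σ`
conjugated by `k ↦ k + d` above. -/
def shift (d : ℕ) (σ : Equiv.Perm ℕ) : Equiv.Perm ℕ where
  toFun k := if k < d then k else σ (k - d) + d
  invFun k := if k < d then k else σ⁻¹ (k - d) + d
  left_inv k := by
    by_cases h : k < d
    · simp [h]
    · dsimp only
      rw [if_neg h, if_neg (by omega), Nat.add_sub_cancel, show σ⁻¹ (σ (k - d)) = k - d from Equiv.Perm.inv_eq_iff_eq.mpr rfl]
      omega
  right_inv k := by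
    by_cases h : k < d
    · simp [h]
    · dsimp only
      rw [if_neg h, if_neg (by omega), Nat.add_sub_cancel, show σ (σ⁻¹ (k - d)) = k - d from (Equiv.eq_symm_apply σ).mp rfl]
      omega

/-- The involution of `ℕ` swapping the blocks `{0,…,d-1}` and `{d,…,2d-1}`. -/
def theta (d : ℕ) : Equiv.Perm ℕ :=
  Function.Involutive.toPerm
    (fun k => if k < d then k + d else if k < 2 * d then k - d else k)
    (by intro k; dsimp only; split_ifs <;> omega)

/-- The braid relators on generators `β₀,…,β_{m-1}` (so `m = n-1` generators for `Bₙ`):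
`β_rβ_sβ_r⁻¹β_s⁻¹` for `r+2 ≤ s` and `β_rβ_sβ_r(β_sβ_rβ_s)⁻¹` for `s = r+1`. -/
def braidRels (m : ℕ) : Set (FreeGroup (Fin m)) :=
  {x | (∃ r s : Fin m, (r : ℕ) + 2 ≤ (s : ℕ) ∧
        x = .of r * .of s * (.of r)⁻¹ * (.of s)⁻¹) ∨
      (∃ r s : Fin m, (s : ℕ) = (r : ℕ) + 1 ∧
        x = .of r * .of s * .of r * ((.of s) * (.of r) * (.of s))⁻¹)}

/-!
`shift a` is a monoid endomorphism of `Equiv.Perm ℕ` with `shift a ∘ shift b = shift (a + b)`,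
so applying `shift ((s - 1) * d)` to the braid relation between `σ` and `shift d σ` gives the
braid relation between `σ_s` and `σ_{s+1}`. For `r + 2 ≤ s` the supports of `σ_r` and `σ_s` lie
in the disjoint blocks `[(r-1)d, (r+1)d)` and `[(s-1)d, (s+1)d)`, so they commute. The
homomorphism `Bₙ → S_ℕ` is then the universal property of the presentation.
-/

lemma shift_apply (d : ℕ) (σ : Equiv.Perm ℕ) (k : ℕ) :
    shift d σ k = if k < d then k else σ (k - d) + d := rfl

lemma shift_apply_of_lt {d k : ℕ} (σ : Equiv.Perm ℕ) (h : k < d) : shift d σ k = k := by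
  rw [shift_apply, if_pos h]

lemma shift_apply_of_add_le {d m k : ℕ} {σ : Equiv.Perm ℕ} (hσ : ∀ k, m ≤ k → σ k = k)
    (h : d + m ≤ k) : shift d σ k = k := by
  rw [shift_apply, if_neg (by omega), hσ (k - d) (by omega)]
  omega

lemma shift_mul (d : ℕ) (σ τ : Equiv.Perm ℕ) :
    shift d (σ * τ) = shift d σ * shift d τ := by
  ext k
  simp only [Equiv.Perm.mul_apply, shift_apply]
  by_cases h : k < d
  · simp [h]
  · rw [if_neg h, if_neg h, if_neg (by omega), Nat.add_sub_cancel]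

lemma shift_shift (a b : ℕ) (σ : Equiv.Perm ℕ) :
    shift a (shift b σ) = shift (a + b) σ := by
  ext k
  simp only [shift_apply]
  by_cases h₁ : k < a
  · rw [if_pos h₁, if_pos (by omega)]
  · rw [if_neg h₁]
    by_cases h₂ : k - a < b
    · rw [if_pos h₂, if_pos (by omega)]
      omega
    · rw [if_neg h₂, if_neg (by omega), show k - a - b = k - (a + b) by omega]
      omega

lemma disjoint_shift_shift {m a b : ℕ} {σ : Equiv.Perm ℕ} (τ : Equiv.Perm ℕ)
    (hσ : ∀ k, m ≤ k → σ k = k) (hab : a + m ≤ b) :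
    (shift a σ).Disjoint (shift b τ) := by
  intro k
  rcases lt_or_ge k b with hk | hk
  · exact .inr (shift_apply_of_lt τ hk)
  · exact .inl (shift_apply_of_add_le hσ (by omega))

lemma shift_braid {d : ℕ} {σ : Equiv.Perm ℕ}
    (h : σ * shift d σ * σ = shift d σ * σ * shift d σ) (c : ℕ) :
    shift c σ * shift (c + d) σ * shift c σ =
      shift (c + d) σ * shift c σ * shift (c + d) σ := by
  rw [← shift_shift, ← shift_mul, ← shift_mul, h, shift_mul, shift_mul]

lemma PresentedGroup.range_toGroup {α G : Type*} [Group G] {rels : Set (FreeGroup α)}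
    {f : α → G} (h : ∀ r ∈ rels, FreeGroup.lift f r = 1) :
    (PresentedGroup.toGroup h).range = Subgroup.closure (Set.range f) := by
  rw [MonoidHom.range_eq_map, ← PresentedGroup.closure_range_of, MonoidHom.map_closure,
    ← Set.range_comp]
  congr 2
  exact funext fun _ => PresentedGroup.toGroup.of h

lemma lift_braidRels_eq_one {G : Type*} [Group G] {m : ℕ} {f : Fin m → G}
    (hcomm : ∀ r s : Fin m, (r : ℕ) + 2 ≤ (s : ℕ) → f r * f s = f s * f r)
    (hbraid : ∀ r s : Fin m, (s : ℕ) = (r : ℕ) + 1 → f r * f s * f r = f s * f r * f s) :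
    ∀ x ∈ braidRels m, FreeGroup.lift f x = 1 := by
  rintro x (⟨r, s, hrs, rfl⟩ | ⟨r, s, hrs, rfl⟩)
  · simp only [map_mul, map_inv, FreeGroup.lift_apply_of, hcomm r s hrs]
    group
  · simpa only [map_mul, map_inv, FreeGroup.lift_apply_of, mul_inv_eq_one] using hbraid r s hrs

theorem stmt_9_general (d n : ℕ) (σ : Equiv.Perm ℕ)
    (hfix : ∀ k, 2 * d ≤ k → σ k = k)
    (hbraid : σ * shift d σ * σ = shift d σ * σ * shift d σ)
    (σs : Fin (n - 1) → Equiv.Perm ℕ)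
    (hσs : ∀ s, σs s = shift ((s : ℕ) * d) σ) :
    (∀ r s : Fin (n - 1), (r : ℕ) + 2 ≤ (s : ℕ) → σs r * σs s = σs s * σs r) ∧
      (∀ r s : Fin (n - 1), (s : ℕ) = (r : ℕ) + 1 →
        σs r * σs s * σs r = σs s * σs r * σs s) ∧
      ∃ φ : PresentedGroup (braidRels (n - 1)) →* Equiv.Perm ℕ,
        (∀ s, φ (PresentedGroup.of s) = σs s) ∧
        MonoidHom.range φ = Subgroup.closure (Set.range σs) := by
  have hcomm : ∀ r s : Fin (n - 1), (r : ℕ) + 2 ≤ (s : ℕ) → σs r * σs s = σs s * σs r := by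
    intro r s hrs
    rw [hσs r, hσs s]
    refine (disjoint_shift_shift σ hfix ?_).commute
    nlinarith
  have hbr : ∀ r s : Fin (n - 1), (s : ℕ) = (r : ℕ) + 1 →
      σs r * σs s * σs r = σs s * σs r * σs s := by
    intro r s hrs
    rw [hσs r, hσs s, hrs, add_one_mul]
    exact shift_braid hbraid _
  have hrels := lift_braidRels_eq_one hcomm hbr
  exact ⟨hcomm, hbr, PresentedGroup.toGroup hrels, fun _ => PresentedGroup.toGroup.of hrels,
    PresentedGroup.range_toGroup hrels⟩

/-- If `σ` (supported on `{0,…,2d-1}`) and `ω^d(σ)` form a braid-like pair, then the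
translates `σ_s = ω^{(s-1)d}(σ)`, `s = 1,…,n-1`, satisfy the braid relations, and
there is a surjective homomorphism from the Artin braid group `Bₙ` onto the subgroup
`Bₙ(σ)` they generate, sending the standard generators to the `σ_s`. -/
theorem stmt_9 (d n : ℕ) (hd : 2 ≤ d) (hn : 3 ≤ n) (σ : Equiv.Perm ℕ)
    (hfix : ∀ k, 2 * d ≤ k → σ k = k)
    (hbraid : σ * shift d σ * σ = shift d σ * σ * shift d σ)
    (hnc : σ * shift d σ ≠ shift d σ * σ)
    (σs : Fin (n - 1) → Equiv.Perm ℕ)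
    (hσs : ∀ s, σs s = shift ((s : ℕ) * d) σ) :
    (∀ r s : Fin (n - 1), (r : ℕ) + 2 ≤ (s : ℕ) → σs r * σs s = σs s * σs r) ∧
      (∀ r s : Fin (n - 1), (s : ℕ) = (r : ℕ) + 1 →
        σs r * σs s * σs r = σs s * σs r * σs s) ∧
      ∃ φ : PresentedGroup (braidRels (n - 1)) →* Equiv.Perm ℕ,
        (∀ s, φ (PresentedGroup.of s) = σs s) ∧
        MonoidHom.range φ = Subgroup.closure (Set.range σs) :=
  stmt_9_general d n σ hfix hbraid σs hσs
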